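/- For every α ∈ ℂ and every (x,y,q) ∈ ℝ³, the series Σ_{k=0}^∞ (α^k/k!) (X_s^k e^{−q²/2})(x,y,q) converges absolutely and its sum equals e^{−q²/2} · e^{(1/2) α (i x − y)(2q + α y)}; in other words, e^{α X_s} e^{−q²/2} = e^{−q²/2} e^{(1/2) α (i x − y)(2q + α y)}. -/

import Mathlib

/-!
Fix `x, y` and put `c = i x - y`. On functions of `q`, `X_s = y ∂_q + i x q` maps
`h(q) e^{-q²/2}` to `(y h' + c q h) e^{-q²/2}`, hence `X_s^k e^{-q²/2} = h_k(c q, c y / 2) e^{-q²/2}`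
with `h_{k+2}(A, B) = A h_{k+1} + 2 (k + 1) B h_k`, a Hermite-type recurrence. The same recurrence
computes the derivatives at `0` of `t ↦ exp (t A + t² B)`, so Taylor's theorem for this entire
function gives `Σ α^k / k! h_k(A, B) = exp (α A + α² B)`, and `α A + α² B = α c (2 q + α y) / 2`.
Absolute convergence follows by comparison with the nonnegative coefficients `h_k(‖A‖, ‖B‖)`.
-/

noncomputable section

open Complex Finset

/-- Points `(x, y, q)` of `ℝ³`. -/
abbrev P3 := ℝ × ℝ × ℝ

/-- Partial derivative with respect to `x`. -/
def pdx (f : P3 → ℂ) : P3 → ℂ := fun p => deriv (fun t => f (t, p.2.1, p.2.2)) p.1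

/-- Partial derivative with respect to `y`. -/
def pdy (f : P3 → ℂ) : P3 → ℂ := fun p => deriv (fun t => f (p.1, t, p.2.2)) p.2.1

/-- Partial derivative with respect to `q`. -/
def pdq (f : P3 → ℂ) : P3 → ℂ := fun p => deriv (fun t => f (p.1, p.2.1, t)) p.2.2

/-- The symplectic Dirac operator `D_s f = i q ∂_y f − ∂_x ∂_q f`. -/
def Ds (f : P3 → ℂ) : P3 → ℂ := fun p =>
  Complex.I * (p.2.2 : ℂ) * pdy f p - pdx (pdq f) p

/-- The operator `X_s f = y ∂_q f + i x q f`. -/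
def Xs (f : P3 → ℂ) : P3 → ℂ := fun p =>
  (p.2.1 : ℂ) * pdq f p + Complex.I * (p.1 : ℂ) * (p.2.2 : ℂ) * f p

/-- The Euler operator `E f = x ∂_x f + y ∂_y f`. -/
def Eul (f : P3 → ℂ) : P3 → ℂ := fun p =>
  (p.1 : ℂ) * pdx f p + (p.2.1 : ℂ) * pdy f p

/-- The Gaussian `e^{−q²/2}`, regarded as a function of `(x,y,q) ∈ ℝ³`. -/
def gauss : P3 → ℂ := fun p => Complex.exp (-(p.2.2 : ℂ) ^ 2 / 2)


def expQuadCoeff {R : Type*} [Semiring R] (A B : R) : ℕ → R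
  | 0 => 1
  | 1 => A
  | k + 2 => A * expQuadCoeff A B (k + 1) + 2 * B * ((k : R) + 1) * expQuadCoeff A B k

section expQuadCoeff

variable {R : Type*} [Semiring R]

theorem expQuadCoeff_succ (A B : R) (k : ℕ) :
    expQuadCoeff A B (k + 1) = A * expQuadCoeff A B k + 2 * B * k * expQuadCoeff A B (k - 1) := by
  cases k with
  | zero => simp [expQuadCoeff]
  | succ k => simp [expQuadCoeff]

theorem map_expQuadCoeff {S : Type*} [Semiring S] (φ : R →+* S) (A B : R) (k : ℕ) :
    φ (expQuadCoeff A B k) = expQuadCoeff (φ A) (φ B) k := by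
  induction k using Nat.twoStepInduction with
  | zero => simp [expQuadCoeff]
  | one => simp [expQuadCoeff]
  | more k ih₁ ih₂ => simp [expQuadCoeff, ih₁, ih₂, map_ofNat]

theorem expQuadCoeff_nonneg [PartialOrder R] [IsOrderedRing R] {A B : R} (hA : 0 ≤ A)
    (hB : 0 ≤ B) (k : ℕ) : 0 ≤ expQuadCoeff A B k := by
  induction k using Nat.twoStepInduction with
  | zero => simp [expQuadCoeff]
  | one => simpa [expQuadCoeff] using hA
  | more k ih₁ ih₂ =>
    have hk : (0 : R) ≤ (k : R) + 1 := add_nonneg k.cast_nonneg zero_le_one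
    exact add_nonneg (mul_nonneg hA ih₂)
      (mul_nonneg (mul_nonneg (mul_nonneg zero_le_two hB) hk) ih₁)

end expQuadCoeff

theorem norm_expQuadCoeff_le {R : Type*} [NormedRing R] [NormOneClass R] (A B : R) (k : ℕ) :
    ‖expQuadCoeff A B k‖ ≤ expQuadCoeff ‖A‖ ‖B‖ k := by
  induction k using Nat.twoStepInduction with
  | zero => simp [expQuadCoeff]
  | one => simp [expQuadCoeff]
  | more k ih₁ ih₂ =>
    have hk : ‖(k : R) + 1‖ ≤ k + 1 := by simpa using Nat.norm_cast_le (α := R) (k + 1)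
    have h2 : ‖(2 : R)‖ ≤ 2 := by simpa using Nat.norm_cast_le (α := R) 2
    calc ‖A * expQuadCoeff A B (k + 1) + 2 * B * ((k : R) + 1) * expQuadCoeff A B k‖
        ≤ ‖A‖ * ‖expQuadCoeff A B (k + 1)‖
            + ‖(2 : R)‖ * ‖B‖ * ‖(k : R) + 1‖ * ‖expQuadCoeff A B k‖ := by
          refine (norm_add_le _ _).trans (add_le_add (norm_mul_le _ _) ?_)
          refine (norm_mul_le _ _).trans (mul_le_mul_of_nonneg_right ?_ (norm_nonneg _))
          exact (norm_mul_le _ _).trans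
            (mul_le_mul_of_nonneg_right (norm_mul_le _ _) (norm_nonneg _))
      _ ≤ ‖A‖ * expQuadCoeff ‖A‖ ‖B‖ (k + 1)
            + 2 * ‖B‖ * ((k : ℝ) + 1) * expQuadCoeff ‖A‖ ‖B‖ k := by
          gcongr

theorem hasDerivAt_expQuadCoeff {𝕜 : Type*} [NontriviallyNormedField 𝕜] (B : 𝕜) (k : ℕ)
    (z : 𝕜) :
    HasDerivAt (fun w => expQuadCoeff w B k) (k * expQuadCoeff z B (k - 1)) z := by
  induction k using Nat.twoStepInduction generalizing z with
  | zero => simpa [expQuadCoeff] using hasDerivAt_const z (1 : 𝕜)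
  | one => simpa [expQuadCoeff] using hasDerivAt_id' z
  | more k ih₁ ih₂ =>
    refine (((hasDerivAt_id z).mul (ih₂ z)).add ((ih₁ z).const_mul _)).congr_deriv ?_
    rw [show k + 2 - 1 = k + 1 from rfl, Nat.add_sub_cancel, expQuadCoeff_succ z B k, id]
    push_cast
    ring

theorem expQuadCoeff_mul_raise {𝕜 𝕜' : Type*} [NontriviallyNormedField 𝕜]
    [NontriviallyNormedField 𝕜'] [NormedAlgebra 𝕜 𝕜'] {u f : 𝕜 → 𝕜'} {u' f' s m B : 𝕜'} {t : 𝕜}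
    (k : ℕ) (hu : HasDerivAt u u' t) (hf : HasDerivAt f f' t) (hsu : s * u' = 2 * B)
    (hsf : s * f' + m * f t = u t * f t) :
    s * deriv (fun r => expQuadCoeff (u r) B k * f r) t + m * (expQuadCoeff (u t) B k * f t) =
      expQuadCoeff (u t) B (k + 1) * f t := by
  have hd : HasDerivAt (fun r => expQuadCoeff (u r) B k * f r)
      (k * expQuadCoeff (u t) B (k - 1) * u' * f t + expQuadCoeff (u t) B k * f') t :=
    ((hasDerivAt_expQuadCoeff B k (u t)).comp t hu).mul hf
  rw [hd.deriv, expQuadCoeff_succ]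
  linear_combination (k * expQuadCoeff (u t) B (k - 1) * f t) * hsu
    + expQuadCoeff (u t) B k * hsf

theorem iteratedDeriv_cexp_quad (A B : ℂ) (k : ℕ) :
    iteratedDeriv k (fun t => exp (t * A + t ^ 2 * B)) =
      fun t => expQuadCoeff (A + 2 * B * t) B k * exp (t * A + t ^ 2 * B) := by
  have hu (t : ℂ) : HasDerivAt (fun t => A + 2 * B * t) (2 * B) t := by
    simpa using ((hasDerivAt_id' t).const_mul (2 * B)).const_add A
  have hf (t : ℂ) : HasDerivAt (fun t => exp (t * A + t ^ 2 * B))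
      (exp (t * A + t ^ 2 * B) * (A + 2 * B * t)) t := by
    have h : HasDerivAt (fun t => t * A + t ^ 2 * B) (A + 2 * B * t) t := by
      refine ((hasDerivAt_mul_const A).add ((hasDerivAt_pow 2 t).mul_const B)).congr_deriv ?_
      ring
    exact h.cexp
  induction k with
  | zero => simp [expQuadCoeff]
  | succ k ih =>
    funext t
    rw [iteratedDeriv_succ, ih]
    simpa using expQuadCoeff_mul_raise (s := 1) (m := 0) k (hu t) (hf t) (by ring) (by ring)

theorem hasSum_expQuadCoeff (A B α : ℂ) :
    HasSum (fun k => α ^ k / k.factorial * expQuadCoeff A B k) (exp (α * A + α ^ 2 * B)) := by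
  have hF : Differentiable ℂ fun t => exp (t * A + t ^ 2 * B) := by fun_prop
  have h := Complex.hasSum_taylorSeries_of_entire hF 0 α
  simp only [iteratedDeriv_cexp_quad] at h
  simpa [div_eq_inv_mul, mul_comm, mul_left_comm, mul_assoc] using h

theorem summable_norm_expQuadCoeff (A B α : ℂ) :
    Summable fun k => ‖α ^ k / k.factorial * expQuadCoeff A B k‖ := by
  have hmaj : Summable fun k => ‖α‖ ^ k / k.factorial * expQuadCoeff ‖A‖ ‖B‖ k := by
    refine Complex.summable_ofReal.mp ?_
    convert (hasSum_expQuadCoeff ‖A‖ ‖B‖ ‖α‖).summable using 2 with k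
    simp [← Complex.ofRealHom_eq_coe, ← map_expQuadCoeff]
  refine hmaj.of_nonneg_of_le (fun k => norm_nonneg _) fun k => ?_
  rw [norm_mul, norm_div, norm_pow, Complex.norm_natCast]
  gcongr
  exact norm_expQuadCoeff_le A B k

theorem iterate_Xs_gauss (k : ℕ) :
    Xs^[k] gauss = fun p => expQuadCoeff ((I * p.1 - p.2.1) * p.2.2)
      ((I * p.1 - p.2.1) * p.2.1 / 2) k * gauss p := by
  induction k with
  | zero => funext p; simp [expQuadCoeff]
  | succ k ih =>
    rw [Function.iterate_succ_apply', ih]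
    funext ⟨x, y, q⟩
    have hu : HasDerivAt (fun t : ℝ => (I * x - y) * (t : ℂ)) (I * x - y) q := by
      simpa using (hasDerivAt_id q).ofReal_comp.const_mul (I * x - y)
    have hf : HasDerivAt (fun t : ℝ => exp (-(t : ℂ) ^ 2 / 2))
        (exp (-(q : ℂ) ^ 2 / 2) * -(q : ℂ)) q := by
      have h : HasDerivAt (fun w : ℂ => -w ^ 2 / 2) (-(q : ℂ)) q := by
        refine ((hasDerivAt_pow 2 (q : ℂ)).neg.div_const 2).congr_deriv ?_
        ring
      exact h.cexp.comp_ofReal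
    simp only [Xs, pdq, gauss]
    exact expQuadCoeff_mul_raise (s := (y : ℂ)) (m := I * x * q) k hu hf (by ring) (by ring)

/-- The series `Σ_k (α^k/k!) X_s^k e^{−q²/2}` converges absolutely at every point and
`e^{α X_s} e^{−q²/2} = e^{−q²/2} e^{(1/2) α (ix−y)(2q+αy)}`. -/
theorem exp_Xs_gauss (α : ℂ) (p : P3) :
    Summable (fun k : ℕ => ‖α ^ k / (Nat.factorial k : ℂ) * (Xs^[k] gauss) p‖) ∧
    ∑' k : ℕ, α ^ k / (Nat.factorial k : ℂ) * (Xs^[k] gauss) p =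
      Complex.exp (-(p.2.2 : ℂ) ^ 2 / 2) *
        Complex.exp ((1 / 2) * α * (Complex.I * (p.1 : ℂ) - (p.2.1 : ℂ)) *
          (2 * (p.2.2 : ℂ) + α * (p.2.1 : ℂ))) := by
  simp only [iterate_Xs_gauss, ← mul_assoc]
  set A : ℂ := (I * p.1 - p.2.1) * p.2.2 with hA
  set B : ℂ := (I * p.1 - p.2.1) * p.2.1 / 2 with hB
  refine ⟨?_, ?_⟩
  · simpa only [norm_mul] using (summable_norm_expQuadCoeff A B α).mul_right ‖gauss p‖
  · rw [((hasSum_expQuadCoeff A B α).mul_right (gauss p)).tsum_eq, mul_comm, hA, hB]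
    congr 2
    ring
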